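/- (Elements of S are nonzero permanent cycles, Lemma 3.2 and Corollary 3.3.) Let S ⊆ R be the F2-span of the elements t_I x_I (I a finite subset of {1,2,…}); S is a subalgebra of R isomorphic to the exterior algebra Λ(t_i x_i : i ≥ 1). Then P(s) = 0 for every s ∈ S, and S ∩ P(R) = {0}. Consequently the composite S ↪ ker(P) ↠ M(R, P) = ker(P)/im(P) is an injective homomorphism of F2-algebras. -/

import Mathlib

/-!
The exterior model `R = Λ_{F₂}(t₁, t₂, …) ⊗ Λ_{F₂}(x₁, x₂, …)`, realized as the free
`F₂`-vector space on basis monomials `t_I x_J` indexed by pairs of finite subsets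
`I, J ⊆ {1, 2, …}` (modelled by `Finset ℕ+`), with the product
`t_I x_J · t_{I'} x_{J'} = t_{I∪I'} x_{J∪J'}` when `I ∩ I' = ∅ = J ∩ J'`, and `0` otherwise;
the operators `Q₁(t_I x_J) = Σ_{j∈J} t_j t_I x_{J∖j}` and
`P(t_I x_J) = Σ_{K⊆J, |K|=2} t_K t_I x_{J∖K}`; and the exchange map `(t_I x_J)ᵉ = t_J x_I`.
-/

noncomputable section

namespace Tmf

abbrev F : Type := ZMod 2

/-- The underlying `F₂`-vector space of `R`, free on pairs of finite subsets of `ℕ+`. -/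
abbrev R : Type := (Finset ℕ+ × Finset ℕ+) →₀ F

/-- The basis monomial `t_I x_J`. -/
def tx (I J : Finset ℕ+) : R := Finsupp.single (I, J) 1

/-- Product of two basis monomials. -/
def mulVal (a b : Finset ℕ+ × Finset ℕ+) : R :=
  if Disjoint a.1 b.1 ∧ Disjoint a.2 b.2 then tx (a.1 ∪ b.1) (a.2 ∪ b.2) else 0

/-- The (bilinear) multiplication of `R`. -/
def mulR : R →ₗ[F] R →ₗ[F] R :=
  Finsupp.lsum F fun a => LinearMap.id.smulRight
    (Finsupp.lsum F fun b => LinearMap.id.smulRight (mulVal a b))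

/-- `Q₁` on a basis monomial: `Q₁(t_I x_J) = Σ_{j∈J} t_j t_I x_{J∖j}`. -/
def Q1val (a : Finset ℕ+ × Finset ℕ+) : R :=
  ∑ j ∈ a.2, if j ∈ a.1 then 0 else tx (insert j a.1) (a.2.erase j)

/-- The operator `Q₁ : R → R`. -/
def Q1R : R →ₗ[F] R := Finsupp.lsum F fun a => LinearMap.id.smulRight (Q1val a)

/-- `P` on a basis monomial: `P(t_I x_J) = Σ_{K⊆J, |K|=2} t_K t_I x_{J∖K}`. -/
def PvalR (a : Finset ℕ+ × Finset ℕ+) : R :=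
  ∑ p ∈ (a.2 ×ˢ a.2).filter fun p => p.1 < p.2,
    if p.1 ∈ a.1 ∨ p.2 ∈ a.1 then 0
    else tx (insert p.1 (insert p.2 a.1)) ((a.2.erase p.1).erase p.2)

/-- The operator `P : R → R` (the `d₂`-differential of the length spectral sequence). -/
def PR : R →ₗ[F] R := Finsupp.lsum F fun a => LinearMap.id.smulRight (PvalR a)

/-- The exchange map `(t_I x_J)ᵉ = t_J x_I`. -/
def exch : R →ₗ[F] R := Finsupp.lsum F fun a => LinearMap.id.smulRight (tx a.2 a.1)

/-- `x_n` (with `n : ℕ` positive, coerced into `ℕ+`). -/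
def xg (n : ℕ) : R := tx ∅ {n.toPNat'}

/-- `t_n` (with `n : ℕ` positive, coerced into `ℕ+`). -/
def tg (n : ℕ) : R := tx {n.toPNat'} ∅

/-- `M_J ⊆ R`: the span of `{t_I x_{J∖I} : I ⊆ J}`. -/
def MJ (J : Finset ℕ+) : Submodule F R :=
  Submodule.span F {m | ∃ I ⊆ J, m = tx I (J \ I)}

/-- The sets `B_{[2t]}` of the recursive construction (Definition 4.2). -/
def B2 : ℕ → Set R
  | 0 => {tx ∅ ∅}
  | t + 1 =>
      (fun b => mulR (Q1R (mulR b (xg (2 * t + 1)))) (xg (2 * t + 2))) '' B2 t ∪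
      (fun b => mulR (exch (Q1R (mulR b (xg (2 * t + 1))))) (tg (2 * t + 2))) '' B2 t

/-- The sets `B_{[n]}` (Definition 4.2): `B_{[0]} = {1}`,
`B_{[2t+1]} = Q₁(B_{[2t]}·x_{2t+1}) ∪ (Q₁(B_{[2t]}·x_{2t+1}))ᵉ`,
`B_{[2t+2]} = Q₁(B_{[2t]}·x_{2t+1})·x_{2t+2} ∪ (Q₁(B_{[2t]}·x_{2t+1}))ᵉ·t_{2t+2}`. -/
def BB (n : ℕ) : Set R :=
  if Even n then B2 (n / 2)
  else
    (fun b => Q1R (mulR b (xg n))) '' B2 (n / 2) ∪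
    (fun b => exch (Q1R (mulR b (xg n)))) '' B2 (n / 2)

/-- `[n] = {1, …, n}` as a `Finset ℕ+`. -/
def rng (n : ℕ) : Finset ℕ+ := (Finset.range n).image fun i => (i + 1).toPNat'

/-- `B_J` for a finite `J ⊆ ℕ+`: the image of `B_{[|J|]}` under the relabeling
`t_i ↦ t_{φ(i)}`, `x_i ↦ x_{φ(i)}`, where `φ : [|J|] → J` is the order-preserving
bijection (`phiJ J`, extended by the identity to all of `ℕ+`). -/
def phiJ (J : Finset ℕ+) (m : ℕ+) : ℕ+ :=
  if h : (m : ℕ) - 1 < J.card then (J.orderIsoOfFin rfl ⟨(m : ℕ) - 1, h⟩ : ℕ+) else m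

/-- `B_J`: the relabeled copy of `B_{[|J|]}` inside `M_J`. -/
def BJ (J : Finset ℕ+) : Set R :=
  (Finsupp.lsum F fun a => LinearMap.id.smulRight
      (tx (a.1.image (phiJ J)) (a.2.image (phiJ J))) : R →ₗ[F] R) '' BB J.card


/-- The subalgebra `S ⊆ R`: the span of the elements `t_I x_I`. -/
def S : Submodule F R := Submodule.span F {m | ∃ I : Finset ℕ+, m = tx I I}

/-!
`S` is the space of elements supported on the diagonal monomials `t_I x_I`, and these multiply
to diagonal monomials or `0`. The operator `P` moves two indices `K` from the `x`-part to the
`t`-part, so the `t`-part of every monomial of `P r` contains an index that its `x`-part lacks: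
`P r` has no diagonal coefficients. Dually, `P (t_I x_J) = 0` whenever `J ⊆ I`, since every
`K ⊆ J` then meets `I`. Hence `P` kills `S`, and `S` meets the image of `P` only in `0`.
-/

@[simp]
lemma mulR_tx (I J I' J' : Finset ℕ+) :
    mulR (tx I J) (tx I' J') = mulVal (I, J) (I', J') := by
  simp [mulR, tx, Finsupp.lsum_single]

@[simp]
lemma PR_tx (I J : Finset ℕ+) : PR (tx I J) = PvalR (I, J) := by
  simp [PR, tx, Finsupp.lsum_single]

lemma S_eq_supported_diagonal : S = Finsupp.supported F F {c | c.1 = c.2} := by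
  rw [S, Finsupp.supported_eq_span_single]
  congr 1
  ext m
  constructor
  · rintro ⟨I, rfl⟩
    exact ⟨(I, I), rfl, rfl⟩
  · rintro ⟨⟨I, J⟩, hIJ, rfl⟩
    obtain rfl : I = J := hIJ
    exact ⟨I, rfl⟩

lemma mulR_mem_S {s s' : R} (hs : s ∈ S) (hs' : s' ∈ S) : mulR s s' ∈ S := by
  have hle : Submodule.map₂ mulR S S ≤ S := by
    rw [S, Submodule.map₂_span_span, Submodule.span_le]
    rintro _ ⟨_, ⟨I, rfl⟩, _, ⟨I', rfl⟩, rfl⟩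
    change mulR (tx I I) (tx I' I') ∈ S
    rw [mulR_tx, mulVal]
    split
    · exact Submodule.subset_span ⟨_, rfl⟩
    · exact S.zero_mem
  exact hle (Submodule.apply_mem_map₂ mulR hs hs')

lemma linearIndependent_tx_diagonal : LinearIndependent F fun I : Finset ℕ+ => tx I I := by
  have h := (Finsupp.basisSingleOne (R := F) (ι := Finset ℕ+ × Finset ℕ+)).linearIndependent
  rw [Finsupp.coe_basisSingleOne] at h
  exact h.comp (fun I => (I, I)) fun I I' hII' => congrArg Prod.fst hII'

lemma PR_tx_eq_zero_of_subset {I J : Finset ℕ+} (hJI : J ⊆ I) : PR (tx I J) = 0 := by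
  rw [PR_tx, PvalR]
  refine Finset.sum_eq_zero fun p hp => if_pos (Or.inl (hJI ?_))
  exact (Finset.mem_product.1 (Finset.mem_filter.1 hp).1).1

lemma S_le_ker_PR : S ≤ LinearMap.ker PR := by
  rw [S, Submodule.span_le]
  rintro _ ⟨I, rfl⟩
  exact PR_tx_eq_zero_of_subset subset_rfl

lemma PvalR_apply_eq_zero_of_subset (a : Finset ℕ+ × Finset ℕ+) {I J : Finset ℕ+}
    (hIJ : I ⊆ J) : PvalR a (I, J) = 0 := by
  rw [PvalR, Finsupp.finsetSum_apply]
  refine Finset.sum_eq_zero fun p _ => ?_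
  split
  · rfl
  · rw [tx, Finsupp.single_apply, if_neg]
    rintro ⟨rfl, rfl⟩
    have hmem : p.1 ∈ ((a.2.erase p.1).erase p.2) := hIJ (Finset.mem_insert_self _ _)
    exact Finset.notMem_erase p.1 a.2 (Finset.mem_of_mem_erase hmem)

lemma PR_apply_eq_zero_of_subset (r : R) {I J : Finset ℕ+} (hIJ : I ⊆ J) :
    PR r (I, J) = 0 := by
  induction r using Finsupp.induction_linear with
  | zero => simp
  | add f g hf hg => rw [map_add, Finsupp.add_apply, hf, hg, add_zero]
  | single a b =>
      rw [PR, Finsupp.lsum_single, LinearMap.smulRight_apply, LinearMap.id_apply,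
        Finsupp.smul_apply, PvalR_apply_eq_zero_of_subset a hIJ, smul_zero]

lemma S_inf_range_PR : S ⊓ LinearMap.range PR = ⊥ := by
  rw [eq_bot_iff]
  rintro s ⟨hsS, r, rfl⟩
  rw [SetLike.mem_coe, S_eq_supported_diagonal, Finsupp.mem_supported'] at hsS
  refine (Submodule.mem_bot F).2 (Finsupp.ext fun ⟨I, J⟩ => ?_)
  by_cases hIJ : I = J
  · subst hIJ
    exact PR_apply_eq_zero_of_subset r subset_rfl
  · exact hsS (I, J) hIJ

/-- elements of `S` are nonzero permanent cycles.
`S` is a subalgebra of `R` (it contains `1 = t_∅ x_∅` and is closed under the product),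
isomorphic to the exterior algebra `Λ(tᵢxᵢ : i ≥ 1)` (the `t_I x_I` are linearly
independent); `P(s) = 0` for every `s ∈ S`; and `S ∩ P(R) = {0}`.  Consequently the
composite `S ↪ ker P ↠ M(R, P)` is an injective homomorphism of `F₂`-algebras. -/
theorem S_permanent_cycles :
    tx ∅ ∅ ∈ S ∧
    (∀ s ∈ S, ∀ s' ∈ S, mulR s s' ∈ S) ∧
    LinearIndependent F (fun I : Finset ℕ+ => tx I I) ∧
    (∀ s ∈ S, PR s = 0) ∧
    S ⊓ LinearMap.range PR = ⊥ :=
  ⟨Submodule.subset_span ⟨∅, rfl⟩, fun _ hs _ hs' => mulR_mem_S hs hs',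
    linearIndependent_tx_diagonal, fun _ hs => S_le_ker_PR hs, S_inf_range_PR⟩

end Tmf

end
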